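/- arXiv:2107.02540 — 4 statements merged into one kernel-verified Lean document; each statement's English description precedes it below -/
import Mathlib

section
/- Suppose F is a smooth symmetric positive-definite 2×2-matrix-valued function of (y¹, y²) with F_{ij} = ∂_i ∂_j f for a smooth function f (Hessian of a Kähler potential), and suppose det F = e^{2y¹}. Set ρ = e^{y¹}, H = 1/F₂₂ and χ = F₁₂/F₂₂. Then dz := d(∂₂ f) satisfies dz = -⋆̂ dρ with respect to the metric ĝ = F_{ij} dy^i dy^j (with orientation dy¹∧dy²), and ρ dH = -⋆̂ dχ. -/
open Matrix

/-- Partial derivative in the first coordinate. -/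
noncomputable def pd1 (f : ℝ × ℝ → ℝ) (y : ℝ × ℝ) : ℝ := fderiv ℝ f y (1, 0)

/-- Partial derivative in the second coordinate. -/
noncomputable def pd2 (f : ℝ × ℝ → ℝ) (y : ℝ × ℝ) : ℝ := fderiv ℝ f y (0, 1)

/-- Hessian matrix `F_{ij} = ∂_i ∂_j f` of a Kähler potential `f`. -/
noncomputable def hess (f : ℝ × ℝ → ℝ) (y : ℝ × ℝ) : Matrix (Fin 2) (Fin 2) ℝ :=
  !![pd1 (pd1 f) y, pd1 (pd2 f) y; pd2 (pd1 f) y, pd2 (pd2 f) y]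

/-- Hodge star of the 2d metric `ĝ = F_{ij} dy^i dy^j` acting on a 1-form with
components `ω`, with orientation `dy¹ ∧ dy²`: `(⋆ω)_a = √(det F) ε_{ab} F^{bc} ω_c`. -/
noncomputable def hodge (F : Matrix (Fin 2) (Fin 2) ℝ) (ω : Fin 2 → ℝ) : Fin 2 → ℝ :=
  ![Real.sqrt F.det * (F⁻¹ 1 0 * ω 0 + F⁻¹ 1 1 * ω 1),
    -(Real.sqrt F.det * (F⁻¹ 0 0 * ω 0 + F⁻¹ 0 1 * ω 1))]

lemma contDiff_pdv {f : ℝ × ℝ → ℝ} (hf : ContDiff ℝ (⊤ : ℕ∞) f) (v : ℝ × ℝ) :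
    ContDiff ℝ (⊤ : ℕ∞) (fun y => fderiv ℝ f y v) :=
  (hf.fderiv_right (by simp)).clm_apply contDiff_const

lemma pdv_symm {f : ℝ × ℝ → ℝ} (hf : ContDiff ℝ (⊤ : ℕ∞) f) (y v w : ℝ × ℝ) :
    fderiv ℝ (fun p => fderiv ℝ f p w) y v = fderiv ℝ (fun p => fderiv ℝ f p v) y w := by
  have hd1 : ∀ p, HasFDerivAt f (fderiv ℝ f p) p := fun p =>
    (hf.differentiable (by simp) p).hasFDerivAt
  have hd2 : HasFDerivAt (fderiv ℝ f) (fderiv ℝ (fderiv ℝ f) y) y :=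
    ((hf.fderiv_right (m := 1) (WithTop.coe_le_coe.mpr le_top)).differentiable one_ne_zero y).hasFDerivAt
  have key : ∀ u w : ℝ × ℝ, fderiv ℝ (fun p => fderiv ℝ f p w) y u
      = fderiv ℝ (fderiv ℝ f) y u w := by
    intro u w
    rw [fderiv_clm_apply hd2.differentiableAt (differentiableAt_const w)]
    simp
  rw [key, key, second_derivative_symmetric hd1 hd2]

lemma pdv_mul {g h : ℝ × ℝ → ℝ} {y v : ℝ × ℝ} (hg : DifferentiableAt ℝ g y)
    (hh : DifferentiableAt ℝ h y) :
    fderiv ℝ (fun p => g p * h p) y v = fderiv ℝ g y v * h y + g y * fderiv ℝ h y v := by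
  rw [fderiv_fun_mul hg hh]
  simp only [ContinuousLinearMap.add_apply, ContinuousLinearMap.smul_apply, smul_eq_mul]
  ring

lemma pdv_sub {g h : ℝ × ℝ → ℝ} {y v : ℝ × ℝ} (hg : DifferentiableAt ℝ g y)
    (hh : DifferentiableAt ℝ h y) :
    fderiv ℝ (fun p => g p - h p) y v = fderiv ℝ g y v - fderiv ℝ h y v := by
  rw [fderiv_fun_sub hg hh]; simp

lemma pd_exp (y v : ℝ × ℝ) :
    fderiv ℝ (fun p : ℝ × ℝ => Real.exp p.1) y v = Real.exp y.1 * v.1 := by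
  have h : HasFDerivAt (fun p : ℝ × ℝ => Real.exp p.1)
      (Real.exp y.1 • ContinuousLinearMap.fst ℝ ℝ ℝ) y :=
    (Real.hasDerivAt_exp y.1).comp_hasFDerivAt y hasFDerivAt_fst
  rw [h.fderiv]; simp

/-- For a smooth Kähler potential `f` with Hessian `F` positive definite and
`det F = e^{2y¹}`, setting `ρ = e^{y¹}`, `H = 1/F₂₂`, `χ = F₁₂/F₂₂`, `z = ∂₂ f`,
one has `dz = -⋆̂ dρ` and `ρ dH = -⋆̂ dχ` (component-wise). -/
theorem stmt12 (f : ℝ × ℝ → ℝ) (hf : ContDiff ℝ (⊤ : ℕ∞) f)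
    (hpos : ∀ y, (hess f y).PosDef)
    (hdet : ∀ y, (hess f y).det = Real.exp (2 * y.1)) :
    ∀ y : ℝ × ℝ,
      (![pd1 (fun p => pd2 f p) y, pd2 (fun p => pd2 f p) y]
        = -(hodge (hess f y)
            ![pd1 (fun p : ℝ × ℝ => Real.exp p.1) y, pd2 (fun p : ℝ × ℝ => Real.exp p.1) y])) ∧
      (Real.exp y.1 • ![pd1 (fun p => 1 / hess f p 1 1) y, pd2 (fun p => 1 / hess f p 1 1) y]
        = -(hodge (hess f y)
            ![pd1 (fun p => hess f p 0 1 / hess f p 1 1) y,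
              pd2 (fun p => hess f p 0 1 / hess f p 1 1) y])) := by
  intro y
  have h1 : ContDiff ℝ (⊤ : ℕ∞) (pd1 f) := contDiff_pdv hf _
  have h2 : ContDiff ℝ (⊤ : ℕ∞) (pd2 f) := contDiff_pdv hf _
  have h11 : ContDiff ℝ (⊤ : ℕ∞) (pd1 (pd1 f)) := contDiff_pdv h1 _
  have h21 : ContDiff ℝ (⊤ : ℕ∞) (pd2 (pd1 f)) := contDiff_pdv h1 _
  have h12 : ContDiff ℝ (⊤ : ℕ∞) (pd1 (pd2 f)) := contDiff_pdv h2 _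
  have h22 : ContDiff ℝ (⊤ : ℕ∞) (pd2 (pd2 f)) := contDiff_pdv h2 _
  have dA : DifferentiableAt ℝ (pd1 (pd1 f)) y := (h11.differentiable (by simp)).differentiableAt
  have dB : DifferentiableAt ℝ (pd1 (pd2 f)) y := (h12.differentiable (by simp)).differentiableAt
  have dC : DifferentiableAt ℝ (pd2 (pd1 f)) y := (h21.differentiable (by simp)).differentiableAt
  have dD : DifferentiableAt ℝ (pd2 (pd2 f)) y := (h22.differentiable (by simp)).differentiableAt
  -- positivity of F₂₂
  have hDpos : ∀ p, 0 < pd2 (pd2 f) p := by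
    intro p
    have hx : (![0,1] : Fin 2 → ℝ) ≠ 0 := by
      intro h; have := congrFun h 1; simp at this
    have h := (hpos p).dotProduct_mulVec_pos hx
    simpa [hess, dotProduct, Matrix.mulVec, Fin.sum_univ_two] using h
  have hDne : ∀ p, pd2 (pd2 f) p ≠ 0 := fun p => (hDpos p).ne'
  -- symmetry of the Hessian
  have hbc : pd1 (pd2 f) = pd2 (pd1 f) := by
    funext p; exact pdv_symm hf p (1,0) (0,1)
  -- determinant relation pointwise
  have hdet' : ∀ p : ℝ × ℝ, pd1 (pd1 f) p * pd2 (pd2 f) p - pd1 (pd2 f) p * pd2 (pd1 f) p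
      = Real.exp p.1 * Real.exp p.1 := by
    intro p
    have h := hdet p
    rw [hess, Matrix.det_fin_two_of] at h
    rw [h, two_mul, Real.exp_add]
  -- third derivative symmetries (in pd form)
  have r2 : pd2 (pd1 (pd2 f)) y = pd1 (pd2 (pd2 f)) y := pdv_symm h2 y (0,1) (1,0)
  have r3 : pd2 (pd1 (pd1 f)) y = pd1 (pd2 (pd1 f)) y := pdv_symm h1 y (0,1) (1,0)
  rw [← hbc] at r3
  -- differentiated determinant relation (in direction (0,1))
  have hE2 : pd2 (pd1 (pd1 f)) y * pd2 (pd2 f) y + pd1 (pd1 f) y * pd2 (pd2 (pd2 f)) y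
      - (pd2 (pd1 (pd2 f)) y * pd2 (pd1 f) y + pd1 (pd2 f) y * pd2 (pd2 (pd1 f)) y) = 0 := by
    have hfun : (fun p => pd1 (pd1 f) p * pd2 (pd2 f) p - pd1 (pd2 f) p * pd2 (pd1 f) p)
        = fun p : ℝ × ℝ => Real.exp p.1 * Real.exp p.1 := funext hdet'
    have dE : DifferentiableAt ℝ (fun p : ℝ × ℝ => Real.exp p.1) y :=
      ((Real.hasDerivAt_exp y.1).comp_hasFDerivAt y hasFDerivAt_fst).differentiableAt
    have h0 : fderiv ℝ (fun p => pd1 (pd1 f) p * pd2 (pd2 f) p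
        - pd1 (pd2 f) p * pd2 (pd1 f) p) y (0,1) = 0 := by
      rw [hfun, pdv_mul dE dE, pd_exp]; simp
    rw [pdv_sub (dA.fun_mul dD) (dB.fun_mul dC), pdv_mul dA dD, pdv_mul dB dC] at h0
    have h1' : fderiv ℝ (pd1 (pd1 f)) y (0,1) * pd2 (pd2 f) y
        + pd1 (pd1 f) y * fderiv ℝ (pd2 (pd2 f)) y (0,1)
        - (fderiv ℝ (pd1 (pd2 f)) y (0,1) * pd2 (pd1 f) y
        + pd1 (pd2 f) y * fderiv ℝ (pd2 (pd1 f)) y (0,1)) = 0 := by linarith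
    exact h1'
  rw [← hbc] at hE2
  -- differentiability of H and χ
  have dH : DifferentiableAt ℝ (fun p => 1 / pd2 (pd2 f) p) y := by
    simpa [one_div] using dD.fun_inv (hDne y)
  have dX : DifferentiableAt ℝ (fun p => pd1 (pd2 f) p / pd2 (pd2 f) p) y := by
    simpa [div_eq_mul_inv] using dB.fun_mul (dD.fun_inv (hDne y))
  have hD := hDne y
  -- implicit derivative equations for H = 1/F₂₂ and χ = F₁₂/F₂₂ (in pd form)
  have hHd : ∀ v : ℝ × ℝ, fderiv ℝ (fun p => 1 / pd2 (pd2 f) p) y v * pd2 (pd2 f) y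
      + (1 / pd2 (pd2 f) y) * fderiv ℝ (pd2 (pd2 f)) y v = 0 := by
    intro v
    have hfun : (fun _ : ℝ × ℝ => (1:ℝ))
        = fun p => (1 / pd2 (pd2 f) p) * pd2 (pd2 f) p := by
      funext p; exact (one_div_mul_cancel (hDne p)).symm
    have h0 : fderiv ℝ (fun _ : ℝ × ℝ => (1:ℝ)) y v = 0 := by simp
    rw [hfun, pdv_mul dH dD] at h0
    exact h0
  have hH1 : pd1 (fun p => 1 / pd2 (pd2 f) p) y * pd2 (pd2 f) y
      + (1 / pd2 (pd2 f) y) * pd1 (pd2 (pd2 f)) y = 0 := hHd (1,0)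
  have hH2 : pd2 (fun p => 1 / pd2 (pd2 f) p) y * pd2 (pd2 f) y
      + (1 / pd2 (pd2 f) y) * pd2 (pd2 (pd2 f)) y = 0 := hHd (0,1)
  have hXd : ∀ v : ℝ × ℝ, fderiv ℝ (pd1 (pd2 f)) y v
      = fderiv ℝ (fun p => pd1 (pd2 f) p / pd2 (pd2 f) p) y v * pd2 (pd2 f) y
      + (pd1 (pd2 f) y / pd2 (pd2 f) y) * fderiv ℝ (pd2 (pd2 f)) y v := by
    intro v
    have hfun : pd1 (pd2 f) = fun p => (pd1 (pd2 f) p / pd2 (pd2 f) p) * pd2 (pd2 f) p := by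
      funext p; exact (div_mul_cancel₀ _ (hDne p)).symm
    conv_lhs => rw [hfun]
    rw [pdv_mul dX dD]
  have hXd1 : pd1 (pd1 (pd2 f)) y
      = pd1 (fun p => pd1 (pd2 f) p / pd2 (pd2 f) p) y * pd2 (pd2 f) y
      + (pd1 (pd2 f) y / pd2 (pd2 f) y) * pd1 (pd2 (pd2 f)) y := hXd (1,0)
  have hXd2 : pd2 (pd1 (pd2 f)) y
      = pd2 (fun p => pd1 (pd2 f) p / pd2 (pd2 f) p) y * pd2 (pd2 f) y
      + (pd1 (pd2 f) y / pd2 (pd2 f) y) * pd2 (pd2 (pd2 f)) y := hXd (0,1)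
  -- matrix computations
  have hsqrt : Real.sqrt (hess f y).det = Real.exp y.1 := by
    rw [hdet y, two_mul, Real.exp_add]
    exact Real.sqrt_mul_self (Real.exp_pos _).le
  have hinv : (hess f y)⁻¹ = (Real.exp y.1 * Real.exp y.1)⁻¹ •
      !![pd2 (pd2 f) y, -(pd1 (pd2 f) y); -(pd2 (pd1 f) y), pd1 (pd1 f) y] := by
    rw [Matrix.inv_def, hdet y, Ring.inverse_eq_inv', hess, Matrix.adjugate_fin_two_of,
      two_mul, Real.exp_add]
  rw [← hbc] at hinv
  have lamH : (fun p => 1 / hess f p 1 1) = (fun p => 1 / pd2 (pd2 f) p) := by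
    funext p; rw [hess]; simp
  have lamX : (fun p => hess f p 0 1 / hess f p 1 1)
      = (fun p => pd1 (pd2 f) p / pd2 (pd2 f) p) := by
    funext p; rw [hess]; simp
  have hρ : Real.exp y.1 ≠ 0 := (Real.exp_pos _).ne'
  have hdy := hdet' y
  rw [← hbc] at hdy
  -- exponential partials in pd form
  have pe1 : pd1 (fun p : ℝ × ℝ => Real.exp p.1) y = Real.exp y.1 := by
    have h := pd_exp y (1, 0); simp only [mul_one] at h; exact h
  have pe2 : pd2 (fun p : ℝ × ℝ => Real.exp p.1) y = 0 := by
    have h := pd_exp y (0, 1); simp only [mul_zero] at h; exact h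
  rw [lamH, lamX]
  -- abbreviations
  set A := pd1 (pd1 f) y with hAdef
  set B := pd1 (pd2 f) y with hBdef
  set D := pd2 (pd2 f) y with hDdef
  set A2 := pd2 (pd1 (pd1 f)) y with hA2def
  set B1 := pd1 (pd1 (pd2 f)) y with hB1def
  set B2 := pd2 (pd1 (pd2 f)) y with hB2def
  set D1 := pd1 (pd2 (pd2 f)) y with hD1def
  set D2 := pd2 (pd2 (pd2 f)) y with hD2def
  set H1 := pd1 (fun p => 1 / pd2 (pd2 f) p) y with hH1def
  set H2 := pd2 (fun p => 1 / pd2 (pd2 f) p) y with hH2def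
  set X1 := pd1 (fun p => pd1 (pd2 f) p / pd2 (pd2 f) p) y with hX1def
  set X2 := pd2 (fun p => pd1 (pd2 f) p / pd2 (pd2 f) p) y with hX2def
  set ρ := Real.exp y.1 with hρdef
  -- polynomial consequences
  have P1 : H1 * D ^ 2 = -D1 := by
    field_simp at hH1; linear_combination hH1
  have P2 : H2 * D ^ 2 = -D2 := by
    field_simp at hH2; linear_combination hH2
  have P3 : X1 * D ^ 2 = B1 * D - B * D1 := by
    field_simp at hXd1; linear_combination -hXd1
  have P4 : X2 * D ^ 2 = B2 * D - B * D2 := by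
    field_simp at hXd2; linear_combination -hXd2
  have P5 : B1 * D = 2 * B * D1 - A * D2 := by
    linear_combination hE2 - D * r3 + 2 * B * r2
  have PX1 : X1 * D ^ 2 = B * D1 - A * D2 := by linear_combination P3 + P5
  have PX2 : X2 * D ^ 2 = D1 * D - B * D2 := by linear_combination P4 + D * r2
  have EH1 : H1 = -(D1 / D ^ 2) := by field_simp; linear_combination P1
  have EH2 : H2 = -(D2 / D ^ 2) := by field_simp; linear_combination P2
  have EX1 : X1 = (B * D1 - A * D2) / D ^ 2 := by field_simp; linear_combination PX1
  have EX2 : X2 = (D1 * D - B * D2) / D ^ 2 := by field_simp; linear_combination PX2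
  constructor
  · funext i
    fin_cases i
    · show B = _
      simp only [hodge, hinv, hsqrt, pe1, pe2, Pi.neg_apply, Matrix.smul_apply,
        Matrix.cons_val_zero, Matrix.cons_val_one, Matrix.head_cons, Matrix.cons_val',
        Matrix.empty_val', Matrix.cons_val_fin_one, Matrix.head_fin_const, smul_eq_mul,
        Fin.zero_eta, Fin.mk_one, Matrix.of_apply]
      field_simp
      ring
    · show D = _
      simp only [hodge, hinv, hsqrt, pe1, pe2, Pi.neg_apply, Matrix.smul_apply,
        Matrix.cons_val_zero, Matrix.cons_val_one, Matrix.head_cons, Matrix.cons_val',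
        Matrix.empty_val', Matrix.cons_val_fin_one, Matrix.head_fin_const, smul_eq_mul,
        Fin.zero_eta, Fin.mk_one, Matrix.of_apply]
      field_simp
      ring
  · funext i
    fin_cases i
    · show ρ * H1 = _
      simp only [hodge, hinv, hsqrt, Pi.neg_apply, Matrix.smul_apply,
        Matrix.cons_val_zero, Matrix.cons_val_one, Matrix.head_cons, Matrix.cons_val',
        Matrix.empty_val', Matrix.cons_val_fin_one, Matrix.head_fin_const, smul_eq_mul,
        Fin.zero_eta, Fin.mk_one, Matrix.of_apply]
      rw [EH1, EX1, EX2]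
      field_simp
      linear_combination D1 * hdy
    · show ρ * H2 = _
      simp only [hodge, hinv, hsqrt, Pi.neg_apply, Matrix.smul_apply,
        Matrix.cons_val_zero, Matrix.cons_val_one, Matrix.head_cons, Matrix.cons_val',
        Matrix.empty_val', Matrix.cons_val_fin_one, Matrix.head_fin_const, smul_eq_mul,
        Fin.zero_eta, Fin.mk_one, Matrix.of_apply]
      rw [EH2, EX1, EX2]
      field_simp
      linear_combination D2 * hdy
end

section
/- For the matrix g(ρ,z) = M·diag(μ⁺, μ⁻)·M^T where μ^± = √(ρ² + (z-a)²) ∓ (z-a) and M is a constant invertible 2×2 matrix with det M = β̂, one has det g = β̂² ρ², and J := g^{-1} dg satisfies the equation ∂_ρ(ρ J_ρ) + ∂_z(ρ J_z) = 0 for ρ > 0. -/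
open Matrix

attribute [local instance] Matrix.normedAddCommGroup Matrix.normedSpace

/-- `g(ρ,z) = M diag(μ⁺, μ⁻) Mᵀ`, `μ^± = √(ρ² + (z-a)²) ∓ (z-a)`. -/
noncomputable def rodGram (M : Matrix (Fin 2) (Fin 2) ℝ) (a : ℝ) (ρ z : ℝ) :
    Matrix (Fin 2) (Fin 2) ℝ :=
  M * Matrix.diagonal ![Real.sqrt (ρ ^ 2 + (z - a) ^ 2) - (z - a),
      Real.sqrt (ρ ^ 2 + (z - a) ^ 2) + (z - a)] * Mᵀ

/-! Since `M` is constant, `g⁻¹ ∂g = M⁻ᵀ diag(∂ log μ⁺, ∂ log μ⁻) Mᵀ`, so the field equation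
decouples into the axisymmetric Laplace equations `∂_ρ(ρ ∂_ρ log μ^±) + ∂_z(ρ ∂_z log μ^±) = 0`.
With `R = √(ρ² + (z-a)²)` and `μ⁺μ⁻ = ρ²`, the fluxes are `ρ ∂_ρ log μ^± = 1 ± (z-a)/R` and
`ρ ∂_z log μ^± = ∓ρ/R`, whose derivatives `∓(z-a)ρ/R³` and `±(z-a)ρ/R³` cancel.
The same identity `μ⁺μ⁻ = ρ²` gives `det g = (det M)² ρ²`. -/

section Conjugation

variable {n 𝕜 : Type*} [Fintype n] [DecidableEq n]

theorem inv_diagonal_of_ne_zero [Field 𝕜] {d : n → 𝕜} (hd : ∀ i, d i ≠ 0) :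
    (diagonal d)⁻¹ = diagonal d⁻¹ := by
  refine inv_eq_left_inv ?_
  rw [diagonal_mul_diagonal, ← diagonal_one]
  exact congrArg diagonal (funext fun i => inv_mul_cancel₀ (hd i))

theorem inv_mul_diagonal_mul_mul_diagonal_mul [Field 𝕜] {A : Matrix n n 𝕜} (hA : IsUnit A.det)
    (B : Matrix n n 𝕜) {d : n → 𝕜} (hd : ∀ i, d i ≠ 0) (d' : n → 𝕜) :
    (A * diagonal d * B)⁻¹ * (A * diagonal d' * B) = B⁻¹ * diagonal (d' / d) * B := by
  rw [Matrix.mul_inv_rev, Matrix.mul_inv_rev, inv_diagonal_of_ne_zero hd]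
  simp only [Matrix.mul_assoc, nonsing_inv_mul_cancel_left _ _ hA]
  rw [← Matrix.mul_assoc (diagonal _), diagonal_mul_diagonal, div_eq_inv_mul]
  rfl

theorem hasDerivAt_mul_diagonal_mul [NontriviallyNormedField 𝕜] [CompleteSpace 𝕜]
    (A B : Matrix n n 𝕜) {d : 𝕜 → n → 𝕜} {d' : n → 𝕜} {x : 𝕜} (hd : HasDerivAt d d' x) :
    HasDerivAt (fun x => A * diagonal (d x) * B) (A * diagonal d' * B) x := by
  let L : (n → 𝕜) →ₗ[𝕜] Matrix n n 𝕜 :=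
    { toFun := fun v => A * diagonal v * B
      map_add' := fun v w => by
        rw [← Matrix.add_mul, ← Matrix.mul_add, diagonal_add]; rfl
      map_smul' := fun c v => by
        rw [RingHom.id_apply, ← Matrix.smul_mul, ← Matrix.mul_smul, diagonal_smul] }
  exact (LinearMap.toContinuousLinearMap L).hasFDerivAt.comp_hasDerivAt x hd

end Conjugation

theorem hasDerivAt_sqrt_sq_add_sq {x b : ℝ} (h : x ^ 2 + b ^ 2 ≠ 0) :
    HasDerivAt (fun y => √(y ^ 2 + b ^ 2)) (x / √(x ^ 2 + b ^ 2)) x := by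
  have hq : HasDerivAt (fun y => y ^ 2 + b ^ 2) (2 * x) x := by
    simpa using (hasDerivAt_pow 2 x).add_const (b ^ 2)
  refine ((Real.hasDerivAt_sqrt h).comp x hq).congr_deriv ?_
  field_simp

theorem hasDerivAt_div_sqrt_sq_add_sq (c : ℝ) {x b : ℝ} (h : x ^ 2 + b ^ 2 ≠ 0) :
    HasDerivAt (fun y => c / √(y ^ 2 + b ^ 2)) (-(c * x) / √(x ^ 2 + b ^ 2) ^ 3) x := by
  have hR : √(x ^ 2 + b ^ 2) ≠ 0 := by positivity
  refine ((hasDerivAt_const x c).div (hasDerivAt_sqrt_sq_add_sq h) hR).congr_deriv ?_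
  field_simp
  ring

section Rod

variable (a : ℝ)

noncomputable def rodRadius (ρ z : ℝ) : ℝ := √(ρ ^ 2 + (z - a) ^ 2)

noncomputable def rodMu (ρ z : ℝ) : Fin 2 → ℝ :=
  ![rodRadius a ρ z - (z - a), rodRadius a ρ z + (z - a)]

-- `(ρ ∂_ρ log μ⁺, ρ ∂_ρ log μ⁻)`, by `rodFluxRho_eq_smul_div_rodMu`
noncomputable def rodFluxRho (ρ z : ℝ) : Fin 2 → ℝ :=
  ![1 + (z - a) / rodRadius a ρ z, 1 - (z - a) / rodRadius a ρ z]

-- `(ρ ∂_z log μ⁺, ρ ∂_z log μ⁻)`, by `rodFluxZ_eq_smul_div_rodMu`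
noncomputable def rodFluxZ (ρ z : ℝ) : Fin 2 → ℝ :=
  ![-(ρ / rodRadius a ρ z), ρ / rodRadius a ρ z]

variable (ρ z : ℝ)

theorem rodGram_eq (M : Matrix (Fin 2) (Fin 2) ℝ) :
    rodGram M a ρ z = M * diagonal (rodMu a ρ z) * Mᵀ := rfl

theorem sq_rodRadius : rodRadius a ρ z ^ 2 = ρ ^ 2 + (z - a) ^ 2 :=
  Real.sq_sqrt (by positivity)

theorem rodMu_zero_mul_rodMu_one : rodMu a ρ z 0 * rodMu a ρ z 1 = ρ ^ 2 := by
  simp only [rodMu, cons_val_zero, cons_val_one]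
  linear_combination sq_rodRadius a ρ z

theorem abs_lt_rodRadius (hρ : ρ ≠ 0) : |z - a| < rodRadius a ρ z :=
  Real.lt_sqrt_of_sq_lt (by rw [sq_abs]; linarith [sq_pos_of_ne_zero hρ])

theorem rodRadius_pos (hρ : ρ ≠ 0) : 0 < rodRadius a ρ z :=
  (abs_nonneg _).trans_lt (abs_lt_rodRadius a ρ z hρ)

theorem rodMu_pos (hρ : ρ ≠ 0) (i : Fin 2) : 0 < rodMu a ρ z i := by
  have habs := abs_lt_rodRadius a ρ z hρ
  fin_cases i <;> simp only [rodMu, Fin.zero_eta, Fin.mk_one, Fin.isValue, cons_val_zero,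
    cons_val_one, cons_val_fin_one] <;> linarith [le_abs_self (z - a), neg_abs_le (z - a)]

theorem rodMu_ne_zero (hρ : ρ ≠ 0) (i : Fin 2) : rodMu a ρ z i ≠ 0 := (rodMu_pos a ρ z hρ i).ne'

theorem hasDerivAt_rodRadius_rho (hρ : ρ ≠ 0) :
    HasDerivAt (fun s => rodRadius a s z) (ρ / rodRadius a ρ z) ρ :=
  hasDerivAt_sqrt_sq_add_sq (by positivity)

theorem hasDerivAt_rodRadius_z (hρ : ρ ≠ 0) :
    HasDerivAt (fun t => rodRadius a ρ t) ((z - a) / rodRadius a ρ z) z := by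
  have h := (hasDerivAt_sqrt_sq_add_sq (x := z - a) (b := ρ) (by positivity)).comp_sub_const z a
  simpa only [rodRadius, add_comm (ρ ^ 2)] using h

theorem hasDerivAt_rodMu_rho (hρ : ρ ≠ 0) :
    HasDerivAt (fun s => rodMu a s z) ![ρ / rodRadius a ρ z, ρ / rodRadius a ρ z] ρ := by
  have hR := hasDerivAt_rodRadius_rho a ρ z hρ
  refine hasDerivAt_pi.2 fun i => ?_
  fin_cases i
  · exact hR.sub_const (z - a)
  · exact hR.add_const (z - a)

theorem hasDerivAt_rodMu_z (hρ : ρ ≠ 0) :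
    HasDerivAt (fun t => rodMu a ρ t)
      ![(z - a) / rodRadius a ρ z - 1, (z - a) / rodRadius a ρ z + 1] z := by
  have hR := hasDerivAt_rodRadius_z a ρ z hρ
  have hw : HasDerivAt (fun t => t - a) 1 z := (hasDerivAt_id z).sub_const a
  refine hasDerivAt_pi.2 fun i => ?_
  fin_cases i
  · exact hR.sub hw
  · exact hR.add hw

theorem rodFluxRho_eq_smul_div_rodMu (hρ : ρ ≠ 0) :
    rodFluxRho a ρ z = ρ • (![ρ / rodRadius a ρ z, ρ / rodRadius a ρ z] / rodMu a ρ z) := by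
  have hμ := rodMu_zero_mul_rodMu_one a ρ z
  have hμ0 := rodMu_ne_zero a ρ z hρ 0
  have hμ1 := rodMu_ne_zero a ρ z hρ 1
  have hR := (rodRadius_pos a ρ z hρ).ne'
  simp only [rodMu, cons_val_zero, cons_val_one] at hμ hμ0 hμ1
  ext i
  fin_cases i <;> simp only [rodFluxRho, rodMu, Fin.zero_eta, Fin.mk_one, Fin.isValue,
    cons_val_zero, cons_val_one, cons_val_fin_one, Pi.smul_apply, Pi.div_apply, smul_eq_mul]
    <;> field_simp <;> linear_combination hμ

theorem rodFluxZ_eq_smul_div_rodMu (hρ : ρ ≠ 0) :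
    rodFluxZ a ρ z
      = ρ • (![(z - a) / rodRadius a ρ z - 1, (z - a) / rodRadius a ρ z + 1] / rodMu a ρ z) := by
  have hμ0 := rodMu_ne_zero a ρ z hρ 0
  have hμ1 := rodMu_ne_zero a ρ z hρ 1
  have hR := (rodRadius_pos a ρ z hρ).ne'
  simp only [rodMu, cons_val_zero, cons_val_one] at hμ0 hμ1
  ext i
  fin_cases i <;> simp only [rodFluxZ, rodMu, Fin.zero_eta, Fin.mk_one, Fin.isValue,
    cons_val_zero, cons_val_one, cons_val_fin_one, Pi.smul_apply, Pi.div_apply, smul_eq_mul]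
    <;> field_simp <;> ring

theorem hasDerivAt_div_rodRadius_rho (c : ℝ) (hρ : ρ ≠ 0) :
    HasDerivAt (fun s => c / rodRadius a s z) (-(c * ρ) / rodRadius a ρ z ^ 3) ρ :=
  hasDerivAt_div_sqrt_sq_add_sq c (by positivity)

theorem hasDerivAt_div_rodRadius_z (c : ℝ) (hρ : ρ ≠ 0) :
    HasDerivAt (fun t => c / rodRadius a ρ t) (-(c * (z - a)) / rodRadius a ρ z ^ 3) z := by
  have h := (hasDerivAt_div_sqrt_sq_add_sq c (x := z - a) (b := ρ) (by positivity)).comp_sub_const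
    z a
  simpa only [rodRadius, add_comm (ρ ^ 2)] using h

theorem hasDerivAt_rodFluxRho (hρ : ρ ≠ 0) :
    HasDerivAt (fun s => rodFluxRho a s z)
      (((z - a) * ρ / rodRadius a ρ z ^ 3) • ![-1, 1]) ρ := by
  have h := hasDerivAt_div_rodRadius_rho a ρ z (z - a) hρ
  refine hasDerivAt_pi.2 fun i => ?_
  fin_cases i
  · simpa [rodFluxRho, neg_div] using h.const_add 1
  · simpa [rodFluxRho, neg_div] using h.const_sub 1

theorem hasDerivAt_rodFluxZ (hρ : ρ ≠ 0) :
    HasDerivAt (fun t => rodFluxZ a ρ t)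
      (-(((z - a) * ρ / rodRadius a ρ z ^ 3) • ![-1, 1])) z := by
  have h := hasDerivAt_div_rodRadius_z a ρ z ρ hρ
  refine hasDerivAt_pi.2 fun i => ?_
  fin_cases i
  · simpa [rodFluxZ, neg_div, mul_comm ρ] using h.fun_neg
  · simpa [rodFluxZ, neg_div, mul_comm ρ] using h

variable (M : Matrix (Fin 2) (Fin 2) ℝ)

theorem deriv_rodGram_rho (hρ : ρ ≠ 0) :
    deriv (fun s => rodGram M a s z) ρ
      = M * diagonal ![ρ / rodRadius a ρ z, ρ / rodRadius a ρ z] * Mᵀ :=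
  (hasDerivAt_mul_diagonal_mul M Mᵀ (hasDerivAt_rodMu_rho a ρ z hρ)).deriv

theorem deriv_rodGram_z (hρ : ρ ≠ 0) :
    deriv (fun t => rodGram M a ρ t) z
      = M * diagonal ![(z - a) / rodRadius a ρ z - 1, (z - a) / rodRadius a ρ z + 1] * Mᵀ :=
  (hasDerivAt_mul_diagonal_mul M Mᵀ (hasDerivAt_rodMu_z a ρ z hρ)).deriv

theorem smul_inv_mul_deriv_rodGram_rho (hM : IsUnit M.det) (hρ : ρ ≠ 0) :
    ρ • ((rodGram M a ρ z)⁻¹ * deriv (fun s => rodGram M a s z) ρ)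
      = Mᵀ⁻¹ * diagonal (rodFluxRho a ρ z) * Mᵀ := by
  rw [deriv_rodGram_rho a ρ z M hρ, rodGram_eq,
    inv_mul_diagonal_mul_mul_diagonal_mul hM _ (rodMu_ne_zero a ρ z hρ),
    ← Matrix.smul_mul, ← Matrix.mul_smul, ← diagonal_smul,
    ← rodFluxRho_eq_smul_div_rodMu a ρ z hρ]

theorem smul_inv_mul_deriv_rodGram_z (hM : IsUnit M.det) (hρ : ρ ≠ 0) :
    ρ • ((rodGram M a ρ z)⁻¹ * deriv (fun t => rodGram M a ρ t) z)
      = Mᵀ⁻¹ * diagonal (rodFluxZ a ρ z) * Mᵀ := by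
  rw [deriv_rodGram_z a ρ z M hρ, rodGram_eq,
    inv_mul_diagonal_mul_mul_diagonal_mul hM _ (rodMu_ne_zero a ρ z hρ),
    ← Matrix.smul_mul, ← Matrix.mul_smul, ← diagonal_smul,
    ← rodFluxZ_eq_smul_div_rodMu a ρ z hρ]

open Filter Topology in
theorem deriv_rho_smul_inv_mul_deriv_rodGram (hM : IsUnit M.det) (hρ : ρ ≠ 0) :
    deriv (fun s => s • ((rodGram M a s z)⁻¹ * deriv (fun s' => rodGram M a s' z) s)) ρ
      = Mᵀ⁻¹ * diagonal (((z - a) * ρ / rodRadius a ρ z ^ 3) • ![-1, 1]) * Mᵀ := by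
  have hflux : (fun s => s • ((rodGram M a s z)⁻¹ * deriv (fun s' => rodGram M a s' z) s))
      =ᶠ[𝓝 ρ] fun s => Mᵀ⁻¹ * diagonal (rodFluxRho a s z) * Mᵀ := by
    filter_upwards [eventually_ne_nhds hρ] with s hs
    exact smul_inv_mul_deriv_rodGram_rho a s z M hM hs
  exact ((hasDerivAt_mul_diagonal_mul _ _ (hasDerivAt_rodFluxRho a ρ z hρ)).congr_of_eventuallyEq
    hflux).deriv

theorem deriv_z_smul_inv_mul_deriv_rodGram (hM : IsUnit M.det) (hρ : ρ ≠ 0) :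
    deriv (fun t => ρ • ((rodGram M a ρ t)⁻¹ * deriv (fun t' => rodGram M a ρ t') t)) z
      = -(Mᵀ⁻¹ * diagonal (((z - a) * ρ / rodRadius a ρ z ^ 3) • ![-1, 1]) * Mᵀ) := by
  have hflux : (fun t => ρ • ((rodGram M a ρ t)⁻¹ * deriv (fun t' => rodGram M a ρ t') t))
      = fun t => Mᵀ⁻¹ * diagonal (rodFluxZ a ρ t) * Mᵀ :=
    funext fun t => smul_inv_mul_deriv_rodGram_z a ρ t M hM hρ
  rw [hflux, ← Matrix.neg_mul, ← Matrix.mul_neg, diagonal_neg]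
  exact (hasDerivAt_mul_diagonal_mul _ _ (hasDerivAt_rodFluxZ a ρ z hρ)).deriv

end Rod

theorem stmt14_general (M : Matrix (Fin 2) (Fin 2) ℝ) (a βh : ℝ)
    (hM : IsUnit M.det) (hdetM : M.det = βh) (ρ z : ℝ) (hρ : 0 < ρ) :
    (rodGram M a ρ z).det = βh ^ 2 * ρ ^ 2 ∧
    deriv (fun s => s • ((rodGram M a s z)⁻¹ * deriv (fun s' => rodGram M a s' z) s)) ρ
      + deriv (fun t => ρ • ((rodGram M a ρ t)⁻¹ * deriv (fun t' => rodGram M a ρ t') t)) z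
      = 0 := by
  refine ⟨?_, ?_⟩
  · rw [rodGram_eq, det_mul, det_mul, det_transpose, det_diagonal, Fin.prod_univ_two,
      rodMu_zero_mul_rodMu_one, hdetM]
    ring
  · rw [deriv_rho_smul_inv_mul_deriv_rodGram a ρ z M hM hρ.ne',
      deriv_z_smul_inv_mul_deriv_rodGram a ρ z M hM hρ.ne',
      add_neg_cancel]

/-- For constant invertible `M` with `det M = β̂ > 0`, the matrix
`g = M diag(μ⁺,μ⁻) Mᵀ` satisfies `det g = β̂² ρ²` and
`∂_ρ(ρ J_ρ) + ∂_z(ρ J_z) = 0` for `ρ > 0`, where `J_ρ = g⁻¹ ∂_ρ g`, `J_z = g⁻¹ ∂_z g`. -/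
theorem stmt14 (M : Matrix (Fin 2) (Fin 2) ℝ) (a βh : ℝ) (hβ : 0 < βh)
    (hM : IsUnit M.det) (hdetM : M.det = βh) (ρ z : ℝ) (hρ : 0 < ρ) :
    (rodGram M a ρ z).det = βh ^ 2 * ρ ^ 2 ∧
    deriv (fun s => s • ((rodGram M a s z)⁻¹ * deriv (fun s' => rodGram M a s' z) s)) ρ
      + deriv (fun t => ρ • ((rodGram M a ρ t)⁻¹ * deriv (fun t' => rodGram M a ρ t') t)) z
      = 0 :=
  stmt14_general M a βh hM hdetM ρ z hρ
end

section
/- For the Euclidean Kerr instanton with parameters μ > 0 and α, with r₊ = μ + √(μ² + α²), Ω = α/(r₊² - α²), β = 4π r₊ (r₊² - α²)/(r₊² + α²), mass m = μ, angular momentum j = -αμ, bolt area A = β·(r₊² + α²)/r₊, and charge Q_χ = 2β α (r₊² + α²)/r₊², the Smarr relation m - 2Ωj = A/(2β) and the angular momentum relation j = -Q_χ/(16π) hold. -/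
/-!
Everything follows from the horizon equation `r₊² - α² = 2 μ r₊`, which is the statement that
`r₊ = μ + √(μ² + α²)` is a root of `r² - 2 μ r - α² = 0`. It gives `Ω = α / (2 μ r₊)` and
`β = 8π μ r₊² / (r₊² + α²)`, after which both relations are identities of rational functions.
-/

open Real

lemma sq_sub_sq_eq_of_eq_add_sqrt {μ α r : ℝ} (hr : r = μ + √(μ ^ 2 + α ^ 2)) :
    r ^ 2 - α ^ 2 = 2 * μ * r := by
  have hs : √(μ ^ 2 + α ^ 2) ^ 2 = μ ^ 2 + α ^ 2 := sq_sqrt (by positivity)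
  rw [hr]
  linear_combination hs

lemma smarr_of_sq_sub_sq_eq {μ α r β : ℝ} (hr : r ≠ 0) (h : r ^ 2 - α ^ 2 = 2 * μ * r)
    (hμ : μ ≠ 0) (hβ : β ≠ 0) :
    μ - 2 * (α / (r ^ 2 - α ^ 2)) * -(α * μ) = β * (r ^ 2 + α ^ 2) / r / (2 * β) := by
  rw [h]
  field_simp
  linear_combination -h

lemma angular_momentum_of_sq_sub_sq_eq {μ α r : ℝ} (hr : r ≠ 0)
    (h : r ^ 2 - α ^ 2 = 2 * μ * r) :
    -(α * μ) = -(2 * (4 * π * r * (r ^ 2 - α ^ 2) / (r ^ 2 + α ^ 2)) * α * (r ^ 2 + α ^ 2)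
      / r ^ 2 / (16 * π)) := by
  have : r ^ 2 + α ^ 2 ≠ 0 := by positivity
  rw [h]
  field_simp
  ring

/-- Smarr-type identities for the Euclidean Kerr instanton: with `r₊ = μ + √(μ²+α²)`,
`Ω = α/(r₊²-α²)`, `β = 4πr₊(r₊²-α²)/(r₊²+α²)`, `m = μ`, `j = -αμ`,
`A = β(r₊²+α²)/r₊`, `Q_χ = 2βα(r₊²+α²)/r₊²`, one has
`m - 2Ωj = A/(2β)` and `j = -Q_χ/(16π)`. -/
theorem stmt18 (μ α r Ω β m j A Q : ℝ) (hμ : 0 < μ)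
    (hr : r = μ + Real.sqrt (μ ^ 2 + α ^ 2))
    (hΩ : Ω = α / (r ^ 2 - α ^ 2))
    (hβ : β = 4 * Real.pi * r * (r ^ 2 - α ^ 2) / (r ^ 2 + α ^ 2))
    (hm : m = μ) (hj : j = -(α * μ))
    (hA : A = β * (r ^ 2 + α ^ 2) / r)
    (hQ : Q = 2 * β * α * (r ^ 2 + α ^ 2) / r ^ 2) :
    m - 2 * Ω * j = A / (2 * β) ∧ j = -(Q / (16 * Real.pi)) := by
  have hhorizon := sq_sub_sq_eq_of_eq_add_sqrt hr
  have hr_pos : 0 < r := by rw [hr]; positivity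
  have hβ_pos : 0 < β := by rw [hβ, hhorizon]; positivity
  subst hΩ hβ hm hj hA hQ
  exact ⟨smarr_of_sq_sub_sq_eq hr_pos.ne' hhorizon hμ.ne' hβ_pos.ne',
    angular_momentum_of_sq_sub_sq_eq hr_pos.ne' hhorizon⟩
end

section
/- Let J be a 2×2-matrix-valued pair (J_ρ, J_z) of smooth functions on the half-plane ρ > 0 satisfying ∂_ρ(ρ J_ρ) + ∂_z(ρ J_z) = 0 and the zero-curvature condition ∂_ρ J_z - ∂_z J_ρ + [J_ρ, J_z] = 0. Define the 1-form ω with components ω_z = (ρ/4)Tr(J_z J_ρ) and ω_ρ = -1/(2ρ) + (ρ/8)Tr(J_ρ² - J_z²). Then dω = 0, i.e., ∂_ρ ω_z = ∂_z ω_ρ. -/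
open Matrix

attribute [local instance] Matrix.normedAddCommGroup Matrix.normedSpace

noncomputable section

/-- The bilinear form `(X, Y) ↦ Tr (X * Y)` on 2×2 real matrices, as a continuous
bilinear map. -/
noncomputable def trB : Matrix (Fin 2) (Fin 2) ℝ →L[ℝ] Matrix (Fin 2) (Fin 2) ℝ →L[ℝ] ℝ :=
  LinearMap.toContinuousLinearMap
    { toFun := fun X => LinearMap.toContinuousLinearMap
        ((Matrix.traceLinearMap (Fin 2) ℝ ℝ).comp (LinearMap.mulLeft ℝ X))
      map_add' := by
        intro X Y
        ext Z
        simp [Matrix.add_mul]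
      map_smul' := by
        intro c X
        ext Z
        simp [Matrix.smul_mul] }

@[simp] lemma trB_apply (X Y : Matrix (Fin 2) (Fin 2) ℝ) : trB X Y = (X * Y).trace := by
  simp [trB]

set_option maxHeartbeats 1600000 in
/-- Integrability of `ν`: if `(J_ρ, J_z)` are smooth matrix-valued functions on the
half-plane `ρ > 0` satisfying `∂_ρ(ρ J_ρ) + ∂_z(ρ J_z) = 0` and the zero-curvature
condition `∂_ρ J_z - ∂_z J_ρ + [J_ρ, J_z] = 0`, then the 1-form with components
`ω_z = (ρ/4)Tr(J_z J_ρ)`, `ω_ρ = -1/(2ρ) + (ρ/8)Tr(J_ρ² - J_z²)` is closed: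
`∂_ρ ω_z = ∂_z ω_ρ`. -/
theorem stmt19 (Jρ Jz : ℝ × ℝ → Matrix (Fin 2) (Fin 2) ℝ)
    (hJρ : ContDiffOn ℝ (⊤ : ℕ∞) Jρ {p : ℝ × ℝ | 0 < p.1})
    (hJz : ContDiffOn ℝ (⊤ : ℕ∞) Jz {p : ℝ × ℝ | 0 < p.1})
    (hdiv : ∀ p : ℝ × ℝ, 0 < p.1 →
      fderiv ℝ (fun q : ℝ × ℝ => q.1 • Jρ q) p (1, 0)
        + fderiv ℝ (fun q : ℝ × ℝ => q.1 • Jz q) p (0, 1) = 0)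
    (hcurv : ∀ p : ℝ × ℝ, 0 < p.1 →
      fderiv ℝ Jz p (1, 0) - fderiv ℝ Jρ p (0, 1)
        + (Jρ p * Jz p - Jz p * Jρ p) = 0) :
    ∀ p : ℝ × ℝ, 0 < p.1 →
      fderiv ℝ (fun q : ℝ × ℝ => q.1 / 4 * (Jz q * Jρ q).trace) p (1, 0)
        = fderiv ℝ (fun q : ℝ × ℝ =>
            -1 / (2 * q.1) + q.1 / 8 * (Jρ q * Jρ q - Jz q * Jz q).trace) p (0, 1) := by
  intro p hp
  have hU : IsOpen {p : ℝ × ℝ | 0 < p.1} := isOpen_lt continuous_const continuous_fst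
  have hmem : {p : ℝ × ℝ | 0 < p.1} ∈ nhds p := hU.mem_nhds hp
  have hAd : DifferentiableAt ℝ Jρ p :=
    (hJρ.contDiffAt hmem).differentiableAt (by simp)
  have hBd : DifferentiableAt ℝ Jz p :=
    (hJz.contDiffAt hmem).differentiableAt (by simp)
  set A := Jρ p with hA0
  set B := Jz p with hB0
  set A' := fderiv ℝ Jρ p with hA'0
  set B' := fderiv ℝ Jz p with hB'0
  have hA : HasFDerivAt Jρ A' p := hAd.hasFDerivAt
  have hB : HasFDerivAt Jz B' p := hBd.hasFDerivAt
  have hbb := trB.isBoundedBilinearMap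
  -- derivative of Tr (Jz * Jρ)
  have hT1 : HasFDerivAt (fun q : ℝ × ℝ => (Jz q * Jρ q).trace)
      ((hbb.deriv (B, A)).comp (B'.prod A')) p := by
    have h := (hbb.hasFDerivAt (B, A)).comp p (hB.prodMk hA)
    exact h.congr_of_eventuallyEq (Filter.Eventually.of_forall fun q => (trB_apply _ _).symm)
  -- derivative of Tr (Jρ * Jρ - Jz * Jz)
  have hT2 : HasFDerivAt (fun q : ℝ × ℝ => (Jρ q * Jρ q - Jz q * Jz q).trace)
      ((hbb.deriv (A, A)).comp (A'.prod A') - (hbb.deriv (B, B)).comp (B'.prod B')) p := by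
    have h1 : HasFDerivAt (fun q : ℝ × ℝ => (Jρ q * Jρ q).trace)
        ((hbb.deriv (A, A)).comp (A'.prod A')) p := by
      have h := (hbb.hasFDerivAt (A, A)).comp p (hA.prodMk hA)
      exact h.congr_of_eventuallyEq (Filter.Eventually.of_forall fun q => (trB_apply _ _).symm)
    have h2 : HasFDerivAt (fun q : ℝ × ℝ => (Jz q * Jz q).trace)
        ((hbb.deriv (B, B)).comp (B'.prod B')) p := by
      have h := (hbb.hasFDerivAt (B, B)).comp p (hB.prodMk hB)
      exact h.congr_of_eventuallyEq (Filter.Eventually.of_forall fun q => (trB_apply _ _).symm)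
    have : HasFDerivAt (fun q : ℝ × ℝ => (Jρ q * Jρ q).trace - (Jz q * Jz q).trace) _ p :=
      h1.sub h2
    simpa [Matrix.trace_sub] using this
  have hfst : HasFDerivAt (fun q : ℝ × ℝ => q.1) (ContinuousLinearMap.fst ℝ ℝ ℝ) p :=
    hasFDerivAt_fst
  have h4 : HasFDerivAt (fun q : ℝ × ℝ => q.1 / 4)
      ((4⁻¹ : ℝ) • ContinuousLinearMap.fst ℝ ℝ ℝ) p := by
    have h : HasFDerivAt (fun q : ℝ × ℝ => (4⁻¹ : ℝ) • q.1) _ p := hfst.const_smul (4⁻¹ : ℝ)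
    have heq : (fun q : ℝ × ℝ => (4⁻¹ : ℝ) • q.1) = fun q : ℝ × ℝ => q.1 / 4 := by
      funext q; simp [smul_eq_mul]; ring
    rwa [heq] at h
  have h8 : HasFDerivAt (fun q : ℝ × ℝ => q.1 / 8)
      ((8⁻¹ : ℝ) • ContinuousLinearMap.fst ℝ ℝ ℝ) p := by
    have h : HasFDerivAt (fun q : ℝ × ℝ => (8⁻¹ : ℝ) • q.1) _ p := hfst.const_smul (8⁻¹ : ℝ)
    have heq : (fun q : ℝ × ℝ => (8⁻¹ : ℝ) • q.1) = fun q : ℝ × ℝ => q.1 / 8 := by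
      funext q; simp [smul_eq_mul]; ring
    rwa [heq] at h
  -- the singular term
  have hinv : HasDerivAt (fun x : ℝ => -1 / (2 * x)) (-1 / 2 * -(p.1 ^ 2)⁻¹) p.1 := by
    have h := (hasDerivAt_inv (ne_of_gt hp)).const_mul (-1 / 2 : ℝ)
    have heq : (fun x : ℝ => -1 / 2 * x⁻¹) = fun x : ℝ => -1 / (2 * x) := by
      funext x
      by_cases hx : x = 0
      · simp [hx]
      · field_simp
    rwa [heq] at h
  have hg : HasFDerivAt (fun q : ℝ × ℝ => -1 / (2 * q.1))
      ((-1 / 2 * -(p.1 ^ 2)⁻¹) • ContinuousLinearMap.fst ℝ ℝ ℝ) p := by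
    have h := hinv.comp_hasFDerivAt p hfst
    exact h
  -- full derivatives of both sides
  have hL : HasFDerivAt (fun q : ℝ × ℝ => q.1 / 4 * (Jz q * Jρ q).trace)
      ((p.1 / 4) • ((hbb.deriv (B, A)).comp (B'.prod A'))
        + (B * A).trace • (4⁻¹ : ℝ) • ContinuousLinearMap.fst ℝ ℝ ℝ) p :=
    h4.mul hT1
  have hR : HasFDerivAt (fun q : ℝ × ℝ =>
        -1 / (2 * q.1) + q.1 / 8 * (Jρ q * Jρ q - Jz q * Jz q).trace)
      (((-1 / 2 * -(p.1 ^ 2)⁻¹) • ContinuousLinearMap.fst ℝ ℝ ℝ)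
        + ((p.1 / 8) • ((hbb.deriv (A, A)).comp (A'.prod A')
            - (hbb.deriv (B, B)).comp (B'.prod B'))
          + (A * A - B * B).trace • (8⁻¹ : ℝ) • ContinuousLinearMap.fst ℝ ℝ ℝ)) p :=
    hg.add (h8.mul hT2)
  rw [hL.fderiv, hR.fderiv]
  -- unpack the hypotheses
  have hdiv' : A + p.1 • A' (1, 0) + p.1 • B' (0, 1) = 0 := by
    have h1 : HasFDerivAt (fun q : ℝ × ℝ => q.1 • Jρ q)
        (p.1 • A' + (ContinuousLinearMap.fst ℝ ℝ ℝ).smulRight A) p := hfst.smul hA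
    have h2 : HasFDerivAt (fun q : ℝ × ℝ => q.1 • Jz q)
        (p.1 • B' + (ContinuousLinearMap.fst ℝ ℝ ℝ).smulRight B) p := hfst.smul hB
    have := hdiv p hp
    rw [h1.fderiv, h2.fderiv] at this
    simpa [add_comm, add_assoc, add_left_comm] using this
  have hcurv' : B' (1, 0) - A' (0, 1) + (A * B - B * A) = 0 := hcurv p hp
  -- trace consequences
  have htr1 : (B' (1, 0) * A).trace - (A' (0, 1) * A).trace
      + ((A * B * A).trace - (B * A * A).trace) = 0 := by
    have := congrArg (fun M => (M * A).trace) hcurv'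
    simpa [Matrix.sub_mul, Matrix.add_mul, Matrix.trace_sub, Matrix.trace_add, mul_assoc]
      using this
  have htr2 : (B * A).trace + p.1 * (B * A' (1, 0)).trace + p.1 * (B * B' (0, 1)).trace = 0 := by
    have := congrArg (fun M => (B * M).trace) hdiv'
    simpa [Matrix.mul_add, Matrix.mul_smul, Matrix.trace_add, Matrix.trace_smul, smul_eq_mul]
      using this
  have hcyc : (A * B * A).trace = (B * A * A).trace := (Matrix.trace_mul_cycle B A A).symm
  have hc1 : (A * A' (0, 1)).trace = (A' (0, 1) * A).trace := Matrix.trace_mul_comm _ _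
  have hc2 : (B * B' (0, 1)).trace = (B' (0, 1) * B).trace := Matrix.trace_mul_comm _ _
  have hc3 : (B' (1, 0) * A).trace = (A * B' (1, 0)).trace := Matrix.trace_mul_comm _ _
  have hc4 : (A' (1, 0) * A).trace = (A * A' (1, 0)).trace := Matrix.trace_mul_comm _ _
  have hc5 : (B' (1, 0) * B).trace = (B * B' (1, 0)).trace := Matrix.trace_mul_comm _ _
  have hc6 : (A' (0, 1) * B).trace = (B * A' (0, 1)).trace := Matrix.trace_mul_comm _ _
  simp only [ContinuousLinearMap.add_apply, ContinuousLinearMap.smul_apply,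
    ContinuousLinearMap.smulRight_apply, ContinuousLinearMap.coe_comp', ContinuousLinearMap.comp_apply, Function.comp_apply,
    ContinuousLinearMap.prod_apply, IsBoundedBilinearMap.deriv_apply, trB_apply,
    ContinuousLinearMap.coe_fst', ContinuousLinearMap.one_apply, smul_eq_mul,
    ContinuousLinearMap.sub_apply]
  have e1 : (hbb.deriv (B, A) ∘SL B'.prod A') (1, 0) = (B * A' (1, 0)).trace + (B' (1, 0) * A).trace := rfl
  have e2 : (hbb.deriv (A, A) ∘SL A'.prod A') (0, 1) = (A * A' (0, 1)).trace + (A' (0, 1) * A).trace := rfl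
  have e3 : (hbb.deriv (B, B) ∘SL B'.prod B') (0, 1) = (B * B' (0, 1)).trace + (B' (0, 1) * B).trace := rfl
  nlinarith [htr1, htr2, hcyc, hc1, hc2, hc3, hc4, hc5, hc6, hp, e1, e2, e3]
end
end
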